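/- Suppose f is continuous on [a,b], piecewise strictly monotone with strict monotonicity on each of finitely many subintervals [x_i, x_{i+1}] (a = x_0 < x_1 < ... < x_{n+1} = b, each x_i for 1 ≤ i ≤ n a local extremum), f(a) ≠ f(b), and min(f(a),f(b)) < f(x) < max(f(a),f(b)) for all x ∈ (a,b). Then the number n of interior local extreme value points is even. -/

import Mathlib

/-!
On the first piece the sign of `f t - f a` (for `t` near `a`) is that of `f b - f a`, because `f t`
lies strictly between `f a` and `f b`; likewise for the last piece at `b`. Hence the first and the
last piece are monotone in the same direction, and since the directions alternate, the number `n`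
of interior turning points is even.
-/

open Set

theorem Bool.eq_iff_even_of_alternating {dir : ℕ → Bool} {n : ℕ}
    (halt : ∀ i < n, dir (i + 1) = !dir i) : dir n = dir 0 ↔ Even n := by
  induction n with
  | zero => simp
  | succ k ih =>
    rw [halt k k.lt_succ_self, Nat.even_add_one,
      ← ih fun i hi ↦ halt i (hi.trans k.lt_succ_self)]
    cases dir k <;> cases dir 0 <;> decide

section StrictlyBetween

variable {f : ℝ → ℝ} {a b : ℝ}

theorem lt_apply_iff_of_strictly_between
    (hbet : ∀ t ∈ Ioo a b, min (f a) (f b) < f t ∧ f t < max (f a) (f b))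
    {t : ℝ} (ht : t ∈ Ioo a b) :
    f a < f t ↔ f a < f b := by
  refine ⟨fun h ↦ ?_, fun h ↦ ?_⟩
  · simpa [lt_max_iff, h.not_gt] using h.trans (hbet t ht).2
  · simpa [min_eq_left h.le] using (hbet t ht).1

theorem apply_lt_iff_of_strictly_between
    (hbet : ∀ t ∈ Ioo a b, min (f a) (f b) < f t ∧ f t < max (f a) (f b))
    {t : ℝ} (ht : t ∈ Ioo a b) :
    f t < f b ↔ f a < f b := by
  refine ⟨fun h ↦ ?_, fun h ↦ ?_⟩
  · simpa [min_lt_iff, h.not_gt] using (hbet t ht).1.trans h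
  · simpa [max_eq_right h.le] using (hbet t ht).2

theorem eq_true_iff_of_first_piece
    (hbet : ∀ t ∈ Ioo a b, min (f a) (f b) < f t ∧ f t < max (f a) (f b))
    {d : Bool} {c : ℝ} (hac : a < c) (hcb : c ≤ b)
    (hmono : (d = true → StrictMonoOn f (Icc a c)) ∧ (d = false → StrictAntiOn f (Icc a c))) :
    d = true ↔ f a < f b := by
  obtain ⟨t, hat, htc⟩ := exists_between hac
  have ha : a ∈ Icc a c := left_mem_Icc.2 hac.le
  have ht : t ∈ Icc a c := ⟨hat.le, htc.le⟩
  rw [← lt_apply_iff_of_strictly_between hbet ⟨hat, htc.trans_le hcb⟩]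
  cases d
  · simpa using (hmono.2 rfl ha ht hat).le
  · simpa using hmono.1 rfl ha ht hat

theorem eq_true_iff_of_last_piece
    (hbet : ∀ t ∈ Ioo a b, min (f a) (f b) < f t ∧ f t < max (f a) (f b))
    {d : Bool} {c : ℝ} (hac : a ≤ c) (hcb : c < b)
    (hmono : (d = true → StrictMonoOn f (Icc c b)) ∧ (d = false → StrictAntiOn f (Icc c b))) :
    d = true ↔ f a < f b := by
  obtain ⟨t, hct, htb⟩ := exists_between hcb
  have hb : b ∈ Icc c b := right_mem_Icc.2 hcb.le
  have ht : t ∈ Icc c b := ⟨hct.le, htb.le⟩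
  rw [← apply_lt_iff_of_strictly_between hbet ⟨hac.trans_lt hct, htb⟩]
  cases d
  · simpa using (hmono.2 rfl ht hb htb).le
  · simpa using hmono.1 rfl ht hb htb

end StrictlyBetween

theorem stmt_4_general (a b : ℝ) (f : ℝ → ℝ) (n : ℕ) (x : ℕ → ℝ) (dir : ℕ → Bool)
    (hx0 : x 0 = a) (hxn : x (n + 1) = b)
    (hxlt : ∀ i ≤ n, x i < x (i + 1))
    (hmono : ∀ i ≤ n, (dir i = true → StrictMonoOn f (Set.Icc (x i) (x (i + 1)))) ∧
      (dir i = false → StrictAntiOn f (Set.Icc (x i) (x (i + 1)))))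
    (halt : ∀ i < n, dir (i + 1) = !dir i)
    (hbet : ∀ t ∈ Set.Ioo a b, min (f a) (f b) < f t ∧ f t < max (f a) (f b)) :
    Even n := by
  subst hx0 hxn
  have hx : MonotoneOn x (Iic (n + 1)) :=
    (strictMonoOn_Iic_of_lt_succ fun i hi ↦ hxlt i (Nat.lt_succ_iff.1 hi)).monotoneOn
  have hfirst := eq_true_iff_of_first_piece hbet (hxlt 0 n.zero_le)
    (hx (by simp) (by simp) (by omega)) (hmono 0 n.zero_le)
  have hlast := eq_true_iff_of_last_piece hbet (hx (by simp) (by simp) n.zero_le)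
    (hxlt n le_rfl) (hmono n le_rfl)
  exact (Bool.eq_iff_even_of_alternating halt).1 (Bool.eq_iff_iff.2 (hlast.trans hfirst.symm))

theorem stmt_4 (a b : ℝ) (f : ℝ → ℝ) (n : ℕ) (x : ℕ → ℝ) (dir : ℕ → Bool)
    (hx0 : x 0 = a) (hxn : x (n + 1) = b)
    (hxlt : ∀ i ≤ n, x i < x (i + 1))
    (hcont : ContinuousOn f (Set.Icc a b))
    (hmono : ∀ i ≤ n, (dir i = true → StrictMonoOn f (Set.Icc (x i) (x (i + 1)))) ∧
      (dir i = false → StrictAntiOn f (Set.Icc (x i) (x (i + 1)))))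
    (halt : ∀ i < n, dir (i + 1) = !dir i)
    (hne : f a ≠ f b)
    (hbet : ∀ t ∈ Set.Ioo a b, min (f a) (f b) < f t ∧ f t < max (f a) (f b)) :
    Even n :=
  stmt_4_general a b f n x dir hx0 hxn hxlt hmono halt hbet
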